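/- If a bipartite state ω on C^M ⊗ C^M has fidelity at least 1−ε with the maximally entangled state, i.e., Tr[Φ ω] ≥ 1−ε with 0 ≤ ε < 1, then R_max(M_A;M_B)_ω ≥ log₂[(1−ε)M]. -/

import Mathlib

/-!
If `ω ≤ μ σ'` then, `Φ` being positive, `Tr[Φ ω] ≤ μ Tr[Φ σ']`. With `F` the swap operator,
`Tr[Φ σ'] = Tr[T_B(σ') F] / M`, and since `-1 ≤ F ≤ 1` this is at most `‖T_B(σ')‖₁ / M ≤ 1 / M`.
Hence every feasible `μ` is at least `(1 - ε) M`; the feasible set is nonempty (`μ = M²` with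
`σ' = 1 / M²`), so its infimum is at least `(1 - ε) M` as well.
-/

open Matrix
open scoped ComplexOrder BigOperators Classical

noncomputable section

/-- Trace norm of a complex square matrix: `‖A‖₁ = Tr √(AᴴA)`. -/
def traceNorm {n : Type*} [Fintype n] [DecidableEq n] (A : Matrix n n ℂ) : ℝ :=
  (((Matrix.posSemidef_conjTranspose_mul_self A).1.eigenvectorUnitary : Matrix n n ℂ) *
    diagonal (((↑) : ℝ → ℂ) ∘ (√·) ∘ (Matrix.posSemidef_conjTranspose_mul_self A).1.eigenvalues) *
    (star (Matrix.posSemidef_conjTranspose_mul_self A).1.eigenvectorUnitary : Matrix n n ℂ)).trace.re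

/-- Partial transpose on the second tensor factor. -/
def ptB {α β : Type*} (A : Matrix (α × β) (α × β) ℂ) : Matrix (α × β) (α × β) ℂ :=
  fun x y => A (x.1, y.2) (y.1, x.2)

/-- The maximally entangled state `Φ = |Φ⟩⟨Φ|` with `|Φ⟩ = (1/√M) ∑ᵢ |i⟩⊗|i⟩`. -/
def maxEnt (M : ℕ) : Matrix (Fin M × Fin M) (Fin M × Fin M) ℂ :=
  fun x y => if x.1 = x.2 ∧ y.1 = y.2 then (1 / (M : ℂ)) else 0

/-- Feasible set for the max-Rains relative entropy of a bipartite state `ω`: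
`{μ > 0 : ω ≤ μ σ', σ' ≥ 0, ‖T_B(σ')‖₁ ≤ 1}`. -/
def rmaxSet (M : ℕ) (ω : Matrix (Fin M × Fin M) (Fin M × Fin M) ℂ) : Set ℝ :=
  {μ : ℝ | 0 < μ ∧ ∃ σ' : Matrix (Fin M × Fin M) (Fin M × Fin M) ℂ,
    σ'.PosSemidef ∧ traceNorm (ptB σ') ≤ 1 ∧ (μ • σ' - ω).PosSemidef}

open scoped MatrixOrder

lemma Matrix.PosSemidef.trace_mul_nonneg {n 𝕜 : Type*} [Fintype n] [RCLike 𝕜]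
    {A B : Matrix n n 𝕜} (hA : A.PosSemidef) (hB : B.PosSemidef) : 0 ≤ (A * B).trace := by
  obtain ⟨S, rfl⟩ := CStarAlgebra.nonneg_iff_eq_star_mul_self.mp hA.nonneg
  rw [star_eq_conjTranspose, mul_assoc, trace_mul_comm]
  exact (hB.mul_mul_conjTranspose_same S).trace_nonneg

lemma Matrix.PosSemidef.trace_mul_le_trace_mul {n 𝕜 : Type*} [Fintype n] [RCLike 𝕜]
    {A B C : Matrix n n 𝕜} (hA : A.PosSemidef) (hBC : B ≤ C) : (A * B).trace ≤ (A * C).trace := by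
  have := hA.trace_mul_nonneg hBC
  rwa [Matrix.mul_sub, trace_sub, sub_nonneg] at this

lemma Matrix.PosSemidef.le_re_trace_smul_one {n 𝕜 : Type*} [Fintype n] [DecidableEq n]
    [RCLike 𝕜] {A : Matrix n n 𝕜} (hA : A.PosSemidef) : A ≤ RCLike.re A.trace • 1 := by
  rw [← Algebra.algebraMap_eq_smul_one]
  refine le_algebraMap_of_spectrum_le (fun x hx => ?_) hA.1.isSelfAdjoint
  obtain ⟨i, rfl⟩ : x ∈ Set.range hA.1.eigenvalues := hA.1.spectrum_real_eq_range_eigenvalues ▸ hx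
  rw [hA.1.trace_eq_sum_eigenvalues, map_sum]
  simpa using Finset.single_le_sum (fun j _ => hA.eigenvalues_nonneg j) (Finset.mem_univ i)

lemma Matrix.IsHermitian.posSemidef_one_add_of_mul_self_eq_one {n 𝕜 : Type*} [Fintype n]
    [DecidableEq n] [RCLike 𝕜] {U : Matrix n n 𝕜} (hU : U.IsHermitian) (hUU : U * U = 1) :
    (1 + U).PosSemidef := by
  have h : 1 + U = (1 / 2 : ℝ) • ((1 + U)ᴴ * (1 + U)) := by
    rw [conjTranspose_add, conjTranspose_one, hU.eq, Matrix.add_mul, Matrix.one_mul,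
      Matrix.mul_add, hUU, Matrix.mul_one]
    module
  rw [h]
  exact (posSemidef_conjTranspose_mul_self _).smul (by norm_num)

lemma re_trace_sub_mul_le {n : Type*} [Fintype n] [DecidableEq n] {P N C : Matrix n n ℂ}
    (hP : P.PosSemidef) (hN : N.PosSemidef) (hC₁ : (1 - C).PosSemidef)
    (hC₂ : (1 + C).PosSemidef) : ((P - N) * C).trace.re ≤ (P + N).trace.re := by
  have key : (P + N).trace - ((P - N) * C).trace = (P * (1 - C)).trace + (N * (1 + C)).trace := by
    simp only [Matrix.mul_sub, Matrix.mul_add, Matrix.sub_mul, Matrix.mul_one, trace_sub,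
      trace_add]
    ring
  have hpos := add_nonneg (hP.trace_mul_nonneg hC₁) (hN.trace_mul_nonneg hC₂)
  rw [← sub_nonneg, ← Complex.sub_re, key]
  exact (Complex.nonneg_iff.mp hpos).1

section TraceNorm

variable {n : Type*} [Fintype n] [DecidableEq n]

lemma traceNorm_eq_re_trace_abs (A : Matrix n n ℂ) : traceNorm A = (CFC.abs A).trace.re := by
  have hA : (star A * A).PosSemidef := posSemidef_conjTranspose_mul_self A
  rw [traceNorm, CFC.abs, CFC.sqrt_eq_real_sqrt _ hA.nonneg, cfcₙ_eq_cfc, hA.1.cfc_eq,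
    IsHermitian.cfc, Unitary.conjStarAlgAut_apply]
  rfl

lemma traceNorm_of_posSemidef {A : Matrix n n ℂ} (hA : A.PosSemidef) :
    traceNorm A = A.trace.re := by
  rw [traceNorm_eq_re_trace_abs, CFC.abs_of_nonneg A hA.nonneg]

lemma re_trace_mul_le_traceNorm {B C : Matrix n n ℂ} (hB : B.IsHermitian)
    (hC₁ : (1 - C).PosSemidef) (hC₂ : (1 + C).PosSemidef) : (B * C).trace.re ≤ traceNorm B := by
  rw [traceNorm_eq_re_trace_abs, ← CFC.posPart_add_negPart B hB.isSelfAdjoint]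
  conv_lhs => rw [← CFC.posPart_sub_negPart B hB.isSelfAdjoint]
  exact re_trace_sub_mul_le (CFC.posPart_nonneg B).posSemidef (CFC.negPart_nonneg B).posSemidef
    hC₁ hC₂

end TraceNorm

section PartialTranspose

variable {α β : Type*}

lemma Matrix.IsHermitian.ptB {A : Matrix (α × β) (α × β) ℂ} (hA : A.IsHermitian) :
    (ptB A).IsHermitian := by
  ext x y
  exact congrFun₂ hA (x.1, y.2) (y.1, x.2)

lemma ptB_smul (c : ℝ) (A : Matrix (α × β) (α × β) ℂ) : ptB (c • A) = c • ptB A := rfl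

lemma ptB_one [DecidableEq α] [DecidableEq β] : ptB (1 : Matrix (α × β) (α × β) ℂ) = 1 := by
  ext x y
  simp [ptB, one_apply, Prod.ext_iff, eq_comm (a := y.2)]

end PartialTranspose

def swapMatrix (α : Type*) [DecidableEq α] : Matrix (α × α) (α × α) ℂ :=
  Matrix.of fun x y => if x = y.swap then 1 else 0

section Swap

variable {α : Type*} [DecidableEq α]

lemma swapMatrix_isHermitian : (swapMatrix α).IsHermitian := by
  ext x y
  simp [swapMatrix, eq_comm (a := y), Prod.swap_eq_iff_eq_swap]

lemma swapMatrix_mul_self [Fintype α] : swapMatrix α * swapMatrix α = 1 := by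
  ext x y
  simp [swapMatrix, mul_apply, one_apply]

lemma posSemidef_one_add_swapMatrix [Fintype α] : (1 + swapMatrix α).PosSemidef :=
  swapMatrix_isHermitian.posSemidef_one_add_of_mul_self_eq_one swapMatrix_mul_self

lemma posSemidef_one_sub_swapMatrix [Fintype α] : (1 - swapMatrix α).PosSemidef := by
  rw [sub_eq_add_neg]
  exact swapMatrix_isHermitian.neg.posSemidef_one_add_of_mul_self_eq_one
    (by rw [neg_mul_neg, swapMatrix_mul_self])

end Swap

section MaxEnt

lemma maxEnt_eq_smul_vecMulVec (M : ℕ) :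
    maxEnt M = (M : ℂ)⁻¹ • vecMulVec (fun x : Fin M × Fin M => if x.1 = x.2 then (1 : ℂ) else 0)
      (star fun x : Fin M × Fin M => if x.1 = x.2 then (1 : ℂ) else 0) := by
  ext x y
  simp only [maxEnt, Matrix.smul_apply, vecMulVec_apply, Pi.star_apply]
  split_ifs <;> simp_all

lemma posSemidef_maxEnt (M : ℕ) : (maxEnt M).PosSemidef := by
  rw [maxEnt_eq_smul_vecMulVec]
  exact (posSemidef_vecMulVec_self_star _).smul (by positivity)

variable {M : ℕ}

lemma trace_maxEnt_mul (A : Matrix (Fin M × Fin M) (Fin M × Fin M) ℂ) :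
    (maxEnt M * A).trace = (M : ℂ)⁻¹ * (ptB A * swapMatrix (Fin M)).trace := by
  simp only [trace, diag_apply, mul_apply, maxEnt, one_div, ite_and, ite_mul, zero_mul,
    Finset.sum_ite_irrel, Fintype.sum_prod_type, Finset.sum_ite_eq, Finset.mem_univ, ↓reduceIte,
    Finset.sum_const_zero, swapMatrix, ptB, of_apply, mul_ite, mul_one, mul_zero,
    Finset.sum_ite_eq', Prod.snd_swap, Prod.fst_swap, Finset.mul_sum]
  exact Finset.sum_comm

lemma re_trace_maxEnt_mul_le {σ : Matrix (Fin M × Fin M) (Fin M × Fin M) ℂ}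
    (hσ : σ.IsHermitian) : (maxEnt M * σ).trace.re ≤ traceNorm (ptB σ) / M := by
  rw [trace_maxEnt_mul, ← Complex.ofReal_natCast, ← Complex.ofReal_inv, Complex.re_ofReal_mul,
    div_eq_inv_mul]
  gcongr
  exact re_trace_mul_le_traceNorm hσ.ptB posSemidef_one_sub_swapMatrix
    posSemidef_one_add_swapMatrix

end MaxEnt

section RmaxSet

variable {M : ℕ} {ω : Matrix (Fin M × Fin M) (Fin M × Fin M) ℂ}

lemma re_trace_maxEnt_mul_le_of_mem_rmaxSet {μ : ℝ} (hμ : μ ∈ rmaxSet M ω) :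
    (maxEnt M * ω).trace.re ≤ μ / M := by
  obtain ⟨hμ₀, σ, hσ, hσnorm, hωσ⟩ := hμ
  calc (maxEnt M * ω).trace.re ≤ (maxEnt M * (μ • σ)).trace.re :=
        (Complex.le_def.mp ((posSemidef_maxEnt M).trace_mul_le_trace_mul hωσ)).1
    _ = μ * (maxEnt M * σ).trace.re := by
        rw [Matrix.mul_smul, trace_smul, Complex.smul_re, smul_eq_mul]
    _ ≤ μ * (traceNorm (ptB σ) / M) := by gcongr; exact re_trace_maxEnt_mul_le hσ.1
    _ ≤ μ / M := by
        rw [mul_div_assoc']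
        gcongr
        exact mul_le_of_le_one_right hμ₀.le hσnorm

lemma sq_mem_rmaxSet (hM : 0 < M) (hω : ω.PosSemidef) (hωt : ω.trace = 1) :
    (M : ℝ) ^ 2 ∈ rmaxSet M ω := by
  have hM2 : (0 : ℝ) < (M : ℝ) ^ 2 := by positivity
  have hσ : (((M : ℝ) ^ 2)⁻¹ • (1 : Matrix (Fin M × Fin M) (Fin M × Fin M) ℂ)).PosSemidef :=
    PosSemidef.one.smul (inv_nonneg.mpr hM2.le)
  refine ⟨hM2, _, hσ, le_of_eq ?_, ?_⟩
  · rw [ptB_smul, ptB_one, traceNorm_of_posSemidef hσ, trace_smul, trace_one, Fintype.card_prod,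
      Fintype.card_fin, Complex.smul_re, Nat.cast_mul, ← sq, smul_eq_mul, ← Complex.ofReal_natCast,
      ← Complex.ofReal_pow, Complex.ofReal_re]
    exact inv_mul_cancel₀ hM2.ne'
  · rw [smul_smul, mul_inv_cancel₀ hM2.ne', one_smul]
    exact le_iff.mp (by simpa [hωt] using hω.le_re_trace_smul_one)

end RmaxSet

theorem rmax_lower_bound_of_fidelity_general (M : ℕ) (hM : 0 < M)
    (ε : ℝ) (hε1 : ε < 1)
    (ω : Matrix (Fin M × Fin M) (Fin M × Fin M) ℂ)
    (hω : ω.PosSemidef) (hωt : ω.trace = 1)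
    (hfid : 1 - ε ≤ ((maxEnt M * ω).trace).re) :
    Real.logb 2 ((1 - ε) * M) ≤ Real.logb 2 (sInf (rmaxSet M ω)) := by
  have hMpos : (0 : ℝ) < M := Nat.cast_pos.mpr hM
  have hbound : (1 - ε) * M ≤ sInf (rmaxSet M ω) :=
    le_csInf ⟨_, sq_mem_rmaxSet hM hω hωt⟩ fun μ hμ =>
      (le_div_iff₀ hMpos).mp (hfid.trans (re_trace_maxEnt_mul_le_of_mem_rmaxSet hμ))
  exact Real.logb_le_logb_of_le one_lt_two (mul_pos (sub_pos.mpr hε1) hMpos) hbound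

/-- If a state `ω` on `ℂ^M ⊗ ℂ^M` has overlap at least `1−ε` with the maximally
entangled state, then `R_max(ω) ≥ log₂[(1−ε)M]`. -/
theorem rmax_lower_bound_of_fidelity (M : ℕ) (hM : 0 < M)
    (ε : ℝ) (hε0 : 0 ≤ ε) (hε1 : ε < 1)
    (ω : Matrix (Fin M × Fin M) (Fin M × Fin M) ℂ)
    (hω : ω.PosSemidef) (hωt : ω.trace = 1)
    (hfid : 1 - ε ≤ ((maxEnt M * ω).trace).re) :
    Real.logb 2 ((1 - ε) * M) ≤ Real.logb 2 (sInf (rmaxSet M ω)) :=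
  rmax_lower_bound_of_fidelity_general M hM ε hε1 ω hω hωt hfid

end
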